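/- arXiv:math/0412118 — 2 statements merged into one kernel-verified Lean document; each statement's English description precedes it below -/
import Mathlib

section
/- For integers 0 ≤ k ≤ n, the q-binomial coefficient evaluated at q = -1 satisfies: [n choose k]_{-1} = 0 if n is even and k is odd, and [n choose k]_{-1} = C(⌊n/2⌋, ⌊k/2⌋) otherwise, where C denotes the ordinary binomial coefficient. -/
/-- The Gaussian binomial coefficient `[n choose k]_q` as a polynomial in `q`,
defined by the recurrence
`[n choose k]_q = [n-1 choose k-1]_q + q^k [n-1 choose k]_q`
with `[n choose 0]_q = 1` and `[0 choose k]_q = 0` for `k > 0`. -/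
noncomputable def qbinPoly : ℕ → ℕ → Polynomial ℤ
  | _, 0 => 1
  | 0, _ + 1 => 0
  | n + 1, k + 1 => qbinPoly n k + Polynomial.X ^ (k + 1) * qbinPoly n (k + 1)
  termination_by n k => n

theorem qbin_aux (n : ℕ) : ∀ k, (qbinPoly n k).eval (-1 : ℤ) =
    if Even n ∧ Odd k then 0 else ((n / 2).choose (k / 2) : ℤ) := by
  induction n with
  | zero =>
    intro k
    match k with
    | 0 => simp [qbinPoly]
    | k + 1 =>
      rw [qbinPoly]
      simp only [Polynomial.eval_zero, Nat.even_iff, Nat.odd_iff]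
      by_cases h : (k + 1) % 2 = 1
      · rw [if_pos ⟨trivial, h⟩]
      · rw [if_neg (fun hc => h hc.2),
          Nat.choose_eq_zero_of_lt (show 0 / 2 < (k + 1) / 2 by omega)]
        simp
  | succ n ih =>
    intro k
    match k with
    | 0 =>
      rw [qbinPoly]
      simp [Nat.odd_iff]
    | j + 1 =>
      rw [qbinPoly]
      simp only [Polynomial.eval_add, Polynomial.eval_mul, Polynomial.eval_pow,
        Polynomial.eval_X]
      rw [ih j, ih (j + 1)]
      simp only [Nat.even_iff, Nat.odd_iff]
      rcases Nat.even_or_odd n with ⟨a, ha⟩ | ⟨a, ha⟩ <;>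
        rcases Nat.even_or_odd j with ⟨b, hb⟩ | ⟨b, hb⟩ <;> subst ha hb
      · -- n even, j even: target k odd, n+1 odd
        rw [if_neg (show ¬((a + a) % 2 = 0 ∧ (b + b) % 2 = 1) by omega),
          if_pos (show (a + a) % 2 = 0 ∧ (b + b + 1) % 2 = 1 by omega),
          if_neg (show ¬((a + a + 1) % 2 = 0 ∧ (b + b + 1) % 2 = 1) by omega)]
        have h1 : (a + a) / 2 = a := by omega
        have h2 : (b + b) / 2 = b := by omega
        have h3 : (a + a + 1) / 2 = a := by omega
        have h4 : (b + b + 1) / 2 = b := by omega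
        rw [h1, h2, h3, h4]; ring
      · -- n even, j odd
        rw [if_pos (show (a + a) % 2 = 0 ∧ (2 * b + 1) % 2 = 1 by omega),
          if_neg (show ¬((a + a) % 2 = 0 ∧ (2 * b + 1 + 1) % 2 = 1) by omega),
          if_neg (show ¬((a + a + 1) % 2 = 0 ∧ (2 * b + 1 + 1) % 2 = 1) by omega)]
        rw [Even.neg_one_pow ⟨b + 1, by omega⟩]
        have h1 : (a + a) / 2 = a := by omega
        have h2 : (2 * b + 1 + 1) / 2 = b + 1 := by omega
        have h3 : (a + a + 1) / 2 = a := by omega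
        rw [h1, h2, h3]; ring
      · -- n odd, j even: target Even (n+1) ∧ Odd (j+1) true
        rw [if_neg (show ¬((2 * a + 1) % 2 = 0 ∧ (b + b) % 2 = 1) by omega),
          if_neg (show ¬((2 * a + 1) % 2 = 0 ∧ (b + b + 1) % 2 = 1) by omega),
          if_pos (show (2 * a + 1 + 1) % 2 = 0 ∧ (b + b + 1) % 2 = 1 by omega)]
        rw [Odd.neg_one_pow ⟨b, by omega⟩]
        have h1 : (2 * a + 1) / 2 = a := by omega
        have h2 : (b + b) / 2 = b := by omega
        have h3 : (b + b + 1) / 2 = b := by omega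
        rw [h1, h2, h3]; ring
      · -- n odd, j odd : Pascal
        rw [if_neg (show ¬((2 * a + 1) % 2 = 0 ∧ (2 * b + 1) % 2 = 1) by omega),
          if_neg (show ¬((2 * a + 1) % 2 = 0 ∧ (2 * b + 1 + 1) % 2 = 1) by omega),
          if_neg (show ¬((2 * a + 1 + 1) % 2 = 0 ∧ (2 * b + 1 + 1) % 2 = 1) by omega)]
        rw [Even.neg_one_pow ⟨b + 1, by omega⟩]
        have h1 : (2 * a + 1) / 2 = a := by omega
        have h2 : (2 * b + 1) / 2 = b := by omega
        have h3 : (2 * a + 1 + 1) / 2 = a + 1 := by omega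
        have h4 : (2 * b + 1 + 1) / 2 = b + 1 := by omega
        rw [h1, h2, h3, h4, one_mul, Nat.choose_succ_succ' a b]
        push_cast; ring

/-- The `q`-binomial coefficient evaluated at `q = -1`: it vanishes when `n`
is even and `k` is odd, and equals `C(⌊n/2⌋, ⌊k/2⌋)` otherwise. -/
theorem qbinom_eval_neg_one (n k : ℕ) (hk : k ≤ n) :
    (qbinPoly n k).eval (-1 : ℤ) =
      if Even n ∧ Odd k then 0 else ((n / 2).choose (k / 2) : ℤ) := by
  exact qbin_aux n k
end

section
/- Let S be a 2m×2n matrix over a commutative ring with m ≤ n, and let S_j denote the j-th column of S. Then ∑_{1 ≤ k_1 < ⋯ < k_m ≤ n} det(S_{k_1},…,S_{k_m},S_{2n+1-k_m},…,S_{2n+1-k_1}) = Pf_{1≤i,j≤2m}( ∑_{k=1}^{n} ( S_{ik} S_{j,2n+1-k} − S_{jk} S_{i,2n+1-k} ) ). -/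
open Matrix

/-- The `k`-th even-indexed position in `Fin (2 * n)`. -/
def fe {n : ℕ} (k : Fin n) : Fin (2 * n) := ⟨2 * k.1, by have := k.isLt; omega⟩

/-- The `k`-th odd-indexed position in `Fin (2 * n)`. -/
def fo {n : ℕ} (k : Fin n) : Fin (2 * n) := ⟨2 * k.1 + 1, by have := k.isLt; omega⟩

/-- The Pfaffian of a `2n × 2n` matrix: the sum, over all perfect matchings
`{{m₁, m₂}, …, {m₂ₙ₋₁, m₂ₙ}}` of `{1, …, 2n}` (encoded as the permutations
`σ` with `σ(2k-1) < σ(2k)` and `σ(1) < σ(3) < ⋯ < σ(2n-1)`), of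
`sgn(σ) · ∏ₖ M_{σ(2k-1), σ(2k)}`. -/
def Pf {R : Type*} [CommRing R] {n : ℕ}
    (M : Matrix (Fin (2 * n)) (Fin (2 * n)) R) : R :=
  ∑ σ ∈ Finset.univ.filter (fun σ : Equiv.Perm (Fin (2 * n)) =>
      (∀ k : Fin n, σ (fe k) < σ (fo k)) ∧
      ∀ k l : Fin n, k < l → σ (fe k) < σ (fe l)),
    (Equiv.Perm.sign σ : ℤ) • ∏ k : Fin n, M (σ (fe k)) (σ (fo k))

/-- Column `k` of a `2n`-column matrix (0-indexed encoding of column `k+1`). -/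
def colLow {n : ℕ} (k : Fin n) : Fin (2 * n) :=
  ⟨k.1, by have := k.isLt; omega⟩

/-- Column `2n + 1 - (k+1)` of a `2n`-column matrix (0-indexed encoding). -/
def colHigh {n : ℕ} (k : Fin n) : Fin (2 * n) :=
  ⟨2 * n - 1 - k.1, by have := k.isLt; omega⟩

/-- Given `k₁ < ⋯ < kₘ` (encoded by a strictly monotone `f : Fin m → Fin n`),
the list of column indices `k₁, …, kₘ, 2n+1-kₘ, …, 2n+1-k₁` of a `2n`-column
matrix. -/
def mirrorCols {m n : ℕ} (f : Fin m → Fin n) (j : Fin (2 * m)) : Fin (2 * n) :=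
  if h : j.1 < m then colLow (f ⟨j.1, h⟩)
  else colHigh (f ⟨2 * m - 1 - j.1, by have := j.isLt; omega⟩)

/-!
Write `M` for the skew matrix on the right and `F τ = sgn τ ∏ₖ M_{τ(2k-1), τ(2k)}` for a
permutation `τ` of `{1, …, 2m}`. Both sides, multiplied by `2^m m!`, equal `∑_τ F τ`.

The hyperoctahedral group of order `2^m m!` (permuting the pairs `{2k-1, 2k}` and flipping
inside them) acts freely on the right on permutations, `F` is invariant because `M` is skew,
and each orbit contains exactly one permutation indexing a term of the Pfaffian; hence
`∑_τ F τ = 2^m m! Pf M`.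

On the other side, `M_{ij} = ∑_c ± S_{ic} S_{jc'}` over the columns `c` and their mirrors `c'`,
so multilinearity gives `∑_τ F τ = ∑_g ± det(S_{g₁}, S_{g₁'}, …, S_{gₘ}, S_{gₘ'})`. Replacing
some `gₖ` by its mirror changes the sign and the determinant alike, which leaves
`2^m ∑_h det(S_{h₁}, S_{h₁'}, …)` over `h : [m] → [n]`. Terms with a repeated `hₖ` vanish and
reordering the `hₖ` permutes the columns evenly, leaving `2^m m!` times the sum over
`h₁ < ⋯ < hₘ`. Finally, the mirror order `k₁, …, kₘ, kₘ', …, k₁'` of the columns is an even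
permutation of the paired order `k₁, k₁', …, kₘ, kₘ'`.

As `2^m m!` may be a zero divisor, the identity is proved for the generic matrix over
`ℤ[S_{ij}]` and then specialized.
-/

open Equiv Finset

lemma Tuple.sort_comp_perm_of_strictMono {m : ℕ} {α : Type*} [LinearOrder α] {f : Fin m → α}
    (hf : StrictMono f) (π : Perm (Fin m)) : Tuple.sort (f ∘ π) = π⁻¹ := by
  have hsorted : (f ∘ π) ∘ Tuple.sort (f ∘ π) = (f ∘ π) ∘ ⇑π⁻¹ :=
    Tuple.unique_monotone (Tuple.monotone_sort _) (by simpa [Function.comp_def] using hf.monotone)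
  exact Equiv.ext (congrFun ((hf.injective.comp π.injective).comp_left hsorted))

open Nat in
lemma sum_eq_factorial_nsmul_sum_strictMono {m : ℕ} {α M : Type*} [LinearOrder α] [Fintype α]
    [AddCommMonoid M] (D : (Fin m → α) → M) (hperm : ∀ h (π : Perm (Fin m)), D (h ∘ π) = D h)
    (hzero : ∀ h, ¬ Function.Injective h → D h = 0) :
    ∑ h, D h = m ! • ∑ f ∈ univ.filter StrictMono, D f := by
  classical
  rw [← sum_filter_add_sum_filter_not univ Function.Injective,
    sum_eq_zero fun h hh => hzero h (mem_filter.1 hh).2, add_zero]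
  have hfactor : ∑ x ∈ univ.filter StrictMono ×ˢ (univ : Finset (Perm (Fin m))), D x.1 =
      ∑ h ∈ univ.filter Function.Injective, D h := by
    refine sum_nbij' (fun x => x.1 ∘ x.2) (fun h => (h ∘ Tuple.sort h, (Tuple.sort h)⁻¹)) ?_ ?_
      ?_ ?_ fun x _ => (hperm _ _).symm
    · rintro ⟨f, π⟩ hf
      simpa using (mem_filter.1 (mem_product.1 hf).1).2.injective.comp π.injective
    · intro h hh
      simpa using (Tuple.monotone_sort h).strictMono_of_injective
        ((mem_filter.1 hh).2.comp (Tuple.sort h).injective)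
    · rintro ⟨f, π⟩ hf
      rw [Tuple.sort_comp_perm_of_strictMono (mem_filter.1 (mem_product.1 hf).1).2]
      ext : 1 <;> simp [Function.comp_def]
    · intro h _
      ext; simp
  rw [← hfactor, sum_product, smul_sum]
  simp [Fintype.card_perm]

section PairPositions

variable {m : ℕ}

def pairEquiv (m : ℕ) : Fin m × Bool ≃ Fin (2 * m) :=
  ((Equiv.refl _).prodCongr finTwoEquiv.symm).trans
    (finProdFinEquiv.trans (finCongr (Nat.mul_comm m 2)))

lemma pairEquiv_false (k : Fin m) : pairEquiv m (k, false) = fe k := by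
  ext; simp [pairEquiv, fe, finTwoEquiv]

lemma pairEquiv_true (k : Fin m) : pairEquiv m (k, true) = fo k := by
  ext; simp [pairEquiv, fo, finTwoEquiv]; omega

lemma fe_injective : Function.Injective (fe (n := m)) := fun a b h => by
  simp only [fe, Fin.ext_iff] at h
  omega

lemma fe_ne_fo (k l : Fin m) : fe k ≠ fo l := by
  simp only [fe, fo, ne_eq, Fin.ext_iff]
  omega

def pairPerm (s : Fin m → Bool) (π : Perm (Fin m)) : Perm (Fin (2 * m)) :=
  permCongr (pairEquiv m)
    ((prodCongrLeft fun _ => π) * prodCongrRight fun k => if s k then swap false true else 1)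

lemma pairPerm_pairEquiv (s : Fin m → Bool) (π : Perm (Fin m)) (x : Fin m × Bool) :
    pairPerm s π (pairEquiv m x) = pairEquiv m (π x.1, xor (s x.1) x.2) := by
  obtain ⟨k, b⟩ := x
  rw [pairPerm, permCongr_apply, symm_apply_apply]
  cases hs : s k <;> cases b <;> simp [hs]

lemma pairPerm_fe (s : Fin m → Bool) (π : Perm (Fin m)) (k : Fin m) :
    pairPerm s π (fe k) = if s k then fo (π k) else fe (π k) := by
  rw [← pairEquiv_false, pairPerm_pairEquiv]
  cases s k <;> simp [pairEquiv_false, pairEquiv_true]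

lemma pairPerm_fo (s : Fin m → Bool) (π : Perm (Fin m)) (k : Fin m) :
    pairPerm s π (fo k) = if s k then fe (π k) else fo (π k) := by
  rw [← pairEquiv_true, pairPerm_pairEquiv]
  cases s k <;> simp [pairEquiv_false, pairEquiv_true]

lemma perm_ext_pairEquiv {σ τ : Perm (Fin (2 * m))}
    (h : ∀ x, σ (pairEquiv m x) = τ (pairEquiv m x)) : σ = τ :=
  Equiv.ext fun j => by simpa using h ((pairEquiv m).symm j)

lemma pairPerm_mul (a : Fin m → Bool) (α : Perm (Fin m)) (b : Fin m → Bool) (β : Perm (Fin m)) :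
    pairPerm a α * pairPerm b β = pairPerm (fun k => xor (a (β k)) (b k)) (α * β) :=
  perm_ext_pairEquiv fun x => by simp [pairPerm_pairEquiv]

lemma pairPerm_one : pairPerm (fun _ => false) (1 : Perm (Fin m)) = 1 :=
  perm_ext_pairEquiv fun x => by simp [pairPerm_pairEquiv]

lemma sign_pairPerm (s : Fin m → Bool) (π : Perm (Fin m)) :
    Perm.sign (pairPerm s π) = ∏ k, if s k then -1 else 1 := by
  rw [pairPerm, Perm.sign_permCongr, map_mul, Perm.sign_prodCongrLeft,
    Perm.sign_prodCongrRight, prod_const, Finset.card_univ, Fintype.card_bool, Int.units_sq,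
    one_mul]
  exact prod_congr rfl fun k _ => by split_ifs <;> simp

end PairPositions

section PfaffianOrbits

variable {R : Type*} [CommRing R] {m : ℕ}

def pfTerm (M : Matrix (Fin (2 * m)) (Fin (2 * m)) R) (τ : Perm (Fin (2 * m))) : R :=
  Perm.sign τ • ∏ k, M (τ (fe k)) (τ (fo k))

lemma pfTerm_mul_pairPerm {M : Matrix (Fin (2 * m)) (Fin (2 * m)) R} (hM : ∀ i j, M j i = -M i j)
    (σ : Perm (Fin (2 * m))) (s : Fin m → Bool) (π : Perm (Fin m)) :
    pfTerm M (σ * pairPerm s π) = pfTerm M σ := by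
  have hfactor : ∀ k, M ((σ * pairPerm s π) (fe k)) ((σ * pairPerm s π) (fo k)) =
      (if s k then -1 else 1 : ℤˣ) • M (σ (fe (π k))) (σ (fo (π k))) := fun k => by
    rw [Perm.mul_apply, Perm.mul_apply, pairPerm_fe, pairPerm_fo]
    split_ifs
    · rw [hM, Units.neg_smul, one_smul]
    · rw [one_smul]
  rw [pfTerm, pfTerm, Fintype.prod_congr _ _ hfactor, Finset.prod_smul,
    Equiv.prod_comp π (fun k => M (σ (fe k)) (σ (fo k))), map_mul, sign_pairPerm, ← mul_smul,
    mul_assoc, Int.units_mul_self, mul_one]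

def flipPattern (τ : Perm (Fin (2 * m))) (k : Fin m) : Bool :=
  decide (τ (fo k) < τ (fe k))

def orientPairs (τ : Perm (Fin (2 * m))) : Perm (Fin (2 * m)) :=
  τ * pairPerm (flipPattern τ) 1

def pairSort (τ : Perm (Fin (2 * m))) : Perm (Fin m) :=
  Tuple.sort fun k => orientPairs τ (fe k)

def pfCanonical (τ : Perm (Fin (2 * m))) : Perm (Fin (2 * m)) :=
  orientPairs τ * pairPerm (fun _ => false) (pairSort τ)

lemma orientPairs_fe_lt_fo (τ : Perm (Fin (2 * m))) (k : Fin m) :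
    orientPairs τ (fe k) < orientPairs τ (fo k) := by
  simp only [orientPairs, flipPattern, Perm.mul_apply, pairPerm_fe, pairPerm_fo, Perm.one_apply]
  by_cases h : τ (fo k) < τ (fe k)
  · simp [h]
  · simpa [h] using lt_of_le_of_ne (not_lt.1 h) (τ.injective.ne (fe_ne_fo k k))

lemma pfCanonical_fe (τ : Perm (Fin (2 * m))) (k : Fin m) :
    pfCanonical τ (fe k) = orientPairs τ (fe (pairSort τ k)) := by
  simp [pfCanonical, pairPerm_fe]

lemma pfCanonical_fo (τ : Perm (Fin (2 * m))) (k : Fin m) :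
    pfCanonical τ (fo k) = orientPairs τ (fo (pairSort τ k)) := by
  simp [pfCanonical, pairPerm_fo]

lemma pfCanonical_fe_lt_fo (τ : Perm (Fin (2 * m))) (k : Fin m) :
    pfCanonical τ (fe k) < pfCanonical τ (fo k) := by
  rw [pfCanonical_fe, pfCanonical_fo]
  exact orientPairs_fe_lt_fo τ _

lemma strictMono_pfCanonical_fe (τ : Perm (Fin (2 * m))) :
    StrictMono fun k => pfCanonical τ (fe k) := by
  have h : (fun k => pfCanonical τ (fe k)) = (fun k => orientPairs τ (fe k)) ∘ pairSort τ :=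
    funext (pfCanonical_fe τ)
  rw [h]
  exact (Tuple.monotone_sort _).strictMono_of_injective
    fun a b hab => (pairSort τ).injective (fe_injective ((orientPairs τ).injective hab))

lemma pfCanonical_mul_pairPerm (τ : Perm (Fin (2 * m))) :
    pfCanonical τ * pairPerm (flipPattern τ) (pairSort τ)⁻¹ = τ := by
  rw [pfCanonical, orientPairs, mul_assoc, mul_assoc, pairPerm_mul, pairPerm_mul]
  simp [pairPerm_one]

section

variable {σ : Perm (Fin (2 * m))} (horient : ∀ k, σ (fe k) < σ (fo k))
include horient

lemma flipPattern_mul_pairPerm (s : Fin m → Bool) (π : Perm (Fin m)) :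
    flipPattern (σ * pairPerm s π) = s := by
  ext k
  simp only [flipPattern, Perm.mul_apply, pairPerm_fe, pairPerm_fo]
  cases s k <;> simp [horient, (horient _).not_gt]

lemma orientPairs_mul_pairPerm (s : Fin m → Bool) (π : Perm (Fin m)) :
    orientPairs (σ * pairPerm s π) = σ * pairPerm (fun _ => false) π := by
  rw [orientPairs, flipPattern_mul_pairPerm horient, mul_assoc, pairPerm_mul]
  simp

variable (hsorted : ∀ k l, k < l → σ (fe k) < σ (fe l))
include hsorted

lemma pairSort_mul_pairPerm (s : Fin m → Bool) (π : Perm (Fin m)) :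
    pairSort (σ * pairPerm s π) = π⁻¹ := by
  have := Tuple.sort_comp_perm_of_strictMono (f := fun k => σ (fe k)) hsorted π
  simpa [pairSort, orientPairs_mul_pairPerm horient, pairPerm_fe, Function.comp_def] using this

lemma pfCanonical_mul_pairPerm_of_ordered (s : Fin m → Bool) (π : Perm (Fin m)) :
    pfCanonical (σ * pairPerm s π) = σ := by
  rw [pfCanonical, pairSort_mul_pairPerm horient hsorted, orientPairs_mul_pairPerm horient,
    mul_assoc, pairPerm_mul]
  simp [pairPerm_one]

end

open Nat in
lemma sum_pfTerm_eq_nsmul_pf {M : Matrix (Fin (2 * m)) (Fin (2 * m)) R}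
    (hM : ∀ i j, M j i = -M i j) : ∑ τ, pfTerm M τ = (2 ^ m * m !) • Pf M := by
  set ordered := univ.filter fun σ : Perm (Fin (2 * m)) =>
    (∀ k, σ (fe k) < σ (fo k)) ∧ ∀ k l, k < l → σ (fe k) < σ (fe l)
  have horbits : ∑ x ∈ ordered ×ˢ (univ : Finset ((Fin m → Bool) × Perm (Fin m))),
      pfTerm M x.1 = ∑ τ, pfTerm M τ := by
    refine sum_nbij' (fun x => x.1 * pairPerm x.2.1 x.2.2)
      (fun τ => (pfCanonical τ, flipPattern τ, (pairSort τ)⁻¹)) (by simp) ?_ ?_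
      (fun τ _ => pfCanonical_mul_pairPerm τ) ?_
    · intro τ _
      simpa [ordered] using ⟨pfCanonical_fe_lt_fo τ, fun k l hkl => strictMono_pfCanonical_fe τ hkl⟩
    · rintro ⟨σ, s, π⟩ hσ
      obtain ⟨horient, hsorted⟩ := (mem_filter.1 (mem_product.1 hσ).1).2
      simp [pfCanonical_mul_pairPerm_of_ordered horient hsorted, flipPattern_mul_pairPerm horient,
        pairSort_mul_pairPerm horient hsorted]
    · rintro ⟨σ, s, π⟩ hσ
      exact (pfTerm_mul_pairPerm hM σ s π).symm
  rw [← horbits, sum_product, Pf, smul_sum]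
  refine sum_congr rfl fun σ _ => ?_
  simp [pfTerm, Units.smul_def, Fintype.card_perm]

end PfaffianOrbits

section PairedColumns

variable {R : Type*} [CommRing R] {m : ℕ} {ι : Type*}

lemma prod_fin_two_mul_eq_prod_pairs (f : Fin (2 * m) → R) :
    ∏ j, f j = ∏ k, f (fe k) * f (fo k) := by
  rw [← (pairEquiv m).prod_comp, Fintype.prod_prod_type]
  simp [pairEquiv_false, pairEquiv_true, mul_comm]

def pairedCols (c : ι → ι) (g : Fin m → ι) (j : Fin (2 * m)) : ι :=
  let x := (pairEquiv m).symm j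
  if x.2 then c (g x.1) else g x.1

lemma pairedCols_fe (c : ι → ι) (g : Fin m → ι) (k : Fin m) : pairedCols c g (fe k) = g k := by
  simp [pairedCols, (pairEquiv m).symm_apply_eq.2 (pairEquiv_false k).symm]

lemma pairedCols_fo (c : ι → ι) (g : Fin m → ι) (k : Fin m) :
    pairedCols c g (fo k) = c (g k) := by
  simp [pairedCols, (pairEquiv m).symm_apply_eq.2 (pairEquiv_true k).symm]

lemma pairedCols_comp_pairPerm {c : ι → ι} (hc : Function.Involutive c) (g : Fin m → ι)
    (s : Fin m → Bool) (π : Perm (Fin m)) :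
    pairedCols c g ∘ pairPerm s π = pairedCols c fun k => if s k then c (g (π k)) else g (π k) := by
  funext j
  obtain ⟨⟨k, b⟩, rfl⟩ := (pairEquiv m).surjective j
  cases b <;> cases hs : s k <;>
    simp [pairEquiv_false, pairEquiv_true, pairPerm_fe, pairPerm_fo, pairedCols_fe,
      pairedCols_fo, hc _, hs]

lemma det_submatrix_pairedCols_of_not_injective (S : Matrix (Fin (2 * m)) ι R) (c : ι → ι)
    {g : Fin m → ι} (hg : ¬ Function.Injective g) : (S.submatrix id (pairedCols c g)).det = 0 := by
  obtain ⟨k, l, hkl, hne⟩ := Function.not_injective_iff.1 hg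
  exact Matrix.det_zero_of_column_eq (fe_injective.ne hne) fun i => by
    simp [pairedCols_fe, hkl]

variable [Fintype ι]

lemma sum_pfTerm_eq_sum_det (S : Matrix (Fin (2 * m)) ι R) (c : ι → ι) (w : ι → R)
    {M : Matrix (Fin (2 * m)) (Fin (2 * m)) R}
    (hM : ∀ i j, M i j = ∑ a, w a * (S i a * S j (c a))) :
    ∑ τ, pfTerm M τ = ∑ g : Fin m → ι, (∏ k, w (g k)) * (S.submatrix id (pairedCols c g)).det := by
  calc ∑ τ, pfTerm M τ
      = ∑ τ, ∑ g : Fin m → ι, Perm.sign τ • ((∏ k, w (g k)) * ∏ j, S (τ j) (pairedCols c g j)) := by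
        refine sum_congr rfl fun τ _ => ?_
        simp only [pfTerm, hM, Fintype.prod_sum, smul_sum, prod_fin_two_mul_eq_prod_pairs,
          pairedCols_fe, pairedCols_fo, ← prod_mul_distrib]
    _ = ∑ g : Fin m → ι, (∏ k, w (g k)) * (S.submatrix id (pairedCols c g)).det := by
        rw [sum_comm]
        simp only [Matrix.det_apply, Matrix.submatrix_apply, id, mul_sum, mul_smul_comm]

end PairedColumns

section PairForm

variable {R : Type*} [CommRing R] {m : ℕ} {κ : Type*}

def pairForm [Fintype κ] (S : Matrix (Fin (2 * m)) (κ × Bool) R) :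
    Matrix (Fin (2 * m)) (Fin (2 * m)) R :=
  Matrix.of fun i j => ∑ k, (S i (k, false) * S j (k, true) - S j (k, false) * S i (k, true))

lemma pairForm_apply_swap [Fintype κ] (S : Matrix (Fin (2 * m)) (κ × Bool) R) (i j : Fin (2 * m)) :
    pairForm S j i = -pairForm S i j := by
  simp only [pairForm, Matrix.of_apply, ← sum_neg_distrib, neg_sub]

lemma pairForm_map {R' : Type*} [CommRing R'] [Fintype κ] (φ : R →+* R')
    (S : Matrix (Fin (2 * m)) (κ × Bool) R) : (pairForm S).map φ = pairForm (S.map φ) := by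
  ext; simp [pairForm]

def pairCols (h : Fin m → κ) : Fin (2 * m) → κ × Bool :=
  pairedCols (fun a => (a.1, !a.2)) fun k => (h k, false)

lemma pairCols_pairEquiv (h : Fin m → κ) (x : Fin m × Bool) :
    pairCols h (pairEquiv m x) = (h x.1, x.2) := by
  obtain ⟨k, _ | _⟩ := x <;> simp [pairCols, pairedCols]

lemma signs_mul_det_submatrix_pairedCols (S : Matrix (Fin (2 * m)) (κ × Bool) R) (h : Fin m → κ)
    (s : Fin m → Bool) :
    (∏ k, (if s k then -1 else 1 : R)) *
      (S.submatrix id (pairedCols (fun a => (a.1, !a.2)) fun k => (h k, s k))).det =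
      (S.submatrix id (pairCols h)).det := by
  have hflip : S.submatrix id (pairedCols (fun a => (a.1, !a.2)) fun k => (h k, s k)) =
      (S.submatrix id (pairCols h)).submatrix id (pairPerm s 1) := by
    rw [Matrix.submatrix_submatrix, pairCols, pairedCols_comp_pairPerm (fun a => by simp)]
    congr; funext k; cases s k <;> rfl
  rw [hflip, Matrix.det_permute', sign_pairPerm, ← mul_assoc]
  convert one_mul _
  push_cast
  rw [← prod_mul_distrib]
  exact prod_eq_one fun k _ => by split_ifs <;> simp

lemma sum_pfTerm_pairForm [Fintype κ] (S : Matrix (Fin (2 * m)) (κ × Bool) R) :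
    ∑ τ, pfTerm (pairForm S) τ = 2 ^ m • ∑ h : Fin m → κ, (S.submatrix id (pairCols h)).det := by
  rw [sum_pfTerm_eq_sum_det S (fun a => (a.1, !a.2)) (fun a => if a.2 then -1 else 1)
    fun i j => by
      simp only [pairForm, Matrix.of_apply, Fintype.sum_prod_type, Fintype.sum_bool]
      exact sum_congr rfl fun k _ => by simp; ring]
  rw [← (Equiv.arrowProdEquivProdArrow _ _ _).symm.sum_comp, Fintype.sum_prod_type, smul_sum]
  refine sum_congr rfl fun h _ =>
    (sum_congr rfl fun s _ => signs_mul_det_submatrix_pairedCols S h s).trans ?_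
  simp

lemma det_submatrix_pairCols_comp (S : Matrix (Fin (2 * m)) (κ × Bool) R) (h : Fin m → κ)
    (π : Perm (Fin m)) :
    (S.submatrix id (pairCols (h ∘ π))).det = (S.submatrix id (pairCols h)).det := by
  have hperm : S.submatrix id (pairCols (h ∘ π)) =
      (S.submatrix id (pairCols h)).submatrix id (pairPerm (fun _ => false) π) := by
    rw [Matrix.submatrix_submatrix, pairCols, pairCols, pairedCols_comp_pairPerm (fun a => by simp)]
    rfl
  rw [hperm, Matrix.det_permute', sign_pairPerm]
  simp

end PairForm

section MirrorOrder

variable {R : Type*} [CommRing R] {m n : ℕ}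

def colLowHigh (a : Fin n × Bool) : Fin (2 * n) :=
  if a.2 then colHigh a.1 else colLow a.1

def mirrorEquiv (m : ℕ) : Fin (2 * m) ≃ Fin m × Bool where
  toFun j := if h : j.1 < m then (⟨j, h⟩, false) else (⟨2 * m - 1 - j, by omega⟩, true)
  invFun a := if a.2 then ⟨2 * m - 1 - a.1, by omega⟩ else ⟨a.1, by omega⟩
  left_inv j := by
    by_cases h : j.1 < m <;> simp only [h, dite_true, dite_false] <;> ext <;> simp; omega
  right_inv a := by
    obtain ⟨k, _ | _⟩ := a
    · simp
    · simp [show ¬ 2 * m - 1 - k.1 < m by omega]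
      ext; simp; omega

def mirrorToPair (m : ℕ) : Perm (Fin (2 * m)) := (mirrorEquiv m).trans (pairEquiv m)

lemma mirrorToPair_val (j : Fin (2 * m)) :
    (mirrorToPair m j : ℕ) = if j.1 < m then 2 * j.1 else 2 * (2 * m - 1 - j.1) + 1 := by
  by_cases h : j.1 < m <;>
    simp [mirrorToPair, mirrorEquiv, h, pairEquiv_false, pairEquiv_true, fe, fo]

lemma mirrorToPair_rev_of_inversion {i j : Fin (2 * m)} (hij : i < j)
    (hinv : ¬ mirrorToPair m i < mirrorToPair m j) :
    i.rev < j ∧ ¬ mirrorToPair m i.rev < mirrorToPair m j ∧ i.rev ≠ i := by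
  have hi := mirrorToPair_val i
  have hj := mirrorToPair_val j
  have hr := mirrorToPair_val i.rev
  have hrev : (i.rev : ℕ) = 2 * m - (i + 1) := Fin.val_rev i
  rw [Fin.lt_def] at hij hinv
  rw [Fin.lt_def, Fin.lt_def, ne_eq, Fin.ext_iff]
  split_ifs at hi hj hr <;> omega

lemma sign_mirrorToPair : Perm.sign (mirrorToPair m) = 1 := by
  rw [Perm.sign_eq_prod_prod_Ioi, prod_sigma']
  -- an inversion `(i, j)` is matched with the inversion `(2m-1-i, j)`
  refine prod_involution
    (fun x _ => if mirrorToPair m x.1 < mirrorToPair m x.2 then x else ⟨x.1.rev, x.2⟩) ?_ ?_ ?_ ?_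
  all_goals
    rintro ⟨i, j⟩ hij
    obtain hij : i < j := by simpa using hij
    by_cases hinv : mirrorToPair m i < mirrorToPair m j
    · simp [hinv, hij]
    obtain ⟨hrev, hrevinv, hne⟩ := mirrorToPair_rev_of_inversion hij hinv
    simp [hinv, hrev, hrevinv, hne]

lemma colLowHigh_comp_pairCols_comp_mirrorToPair (f : Fin m → Fin n) :
    colLowHigh ∘ pairCols f ∘ mirrorToPair m = mirrorCols f := by
  funext j
  by_cases h : j.1 < m <;>
    simp [mirrorToPair, mirrorEquiv, h, pairCols_pairEquiv, colLowHigh, mirrorCols]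

lemma det_submatrix_pairCols_eq_mirrorCols (S : Matrix (Fin (2 * m)) (Fin (2 * n)) R)
    (f : Fin m → Fin n) :
    ((S.submatrix id colLowHigh).submatrix id (pairCols f)).det =
      (S.submatrix id (mirrorCols f)).det := by
  rw [← colLowHigh_comp_pairCols_comp_mirrorToPair]
  change _ = (((S.submatrix id colLowHigh).submatrix id (pairCols f)).submatrix id
    (mirrorToPair m)).det
  rw [Matrix.det_permute', sign_mirrorToPair, Units.val_one, Int.cast_one, one_mul]

open Nat in
lemma nsmul_sum_det_mirrorCols_eq_nsmul_pf (S : Matrix (Fin (2 * m)) (Fin (2 * n)) R) :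
    (2 ^ m * m !) • ∑ f ∈ univ.filter (fun f : Fin m → Fin n => StrictMono f),
        (S.submatrix id (mirrorCols f)).det =
      (2 ^ m * m !) • Pf (pairForm (S.submatrix id colLowHigh)) := by
  rw [← sum_pfTerm_eq_nsmul_pf (pairForm_apply_swap _), sum_pfTerm_pairForm,
    sum_eq_factorial_nsmul_sum_strictMono
      (fun h => ((S.submatrix id colLowHigh).submatrix id (pairCols h)).det)
      (det_submatrix_pairCols_comp _)
      fun h hh => det_submatrix_pairedCols_of_not_injective _ _
        fun hinj => hh fun a b hab => hinj (by simp [hab])]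
  simp only [det_submatrix_pairCols_eq_mirrorCols, mul_nsmul']

end MirrorOrder

lemma RingHom.map_pf {R R' : Type*} [CommRing R] [CommRing R'] (φ : R →+* R') {m : ℕ}
    (M : Matrix (Fin (2 * m)) (Fin (2 * m)) R) : φ (Pf M) = Pf (φ.mapMatrix M) := by
  simp [Pf, map_prod]

theorem sum_det_mirror_eq_pf_general {R : Type*} [CommRing R] (m n : ℕ)
    (S : Matrix (Fin (2 * m)) (Fin (2 * n)) R) :
    ∑ f ∈ Finset.univ.filter (fun f : Fin m → Fin n => StrictMono f),
        (S.submatrix id (mirrorCols f)).det =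
      Pf (Matrix.of fun i j : Fin (2 * m) =>
        ∑ k : Fin n,
          (S i (colLow k) * S j (colHigh k) - S j (colLow k) * S i (colHigh k))) := by
  let X : Matrix (Fin (2 * m)) (Fin (2 * n)) (MvPolynomial (Fin (2 * m) × Fin (2 * n)) ℤ) :=
    Matrix.of fun i j => .X (i, j)
  let φ := MvPolynomial.eval₂Hom (Int.castRingHom R) fun p : Fin (2 * m) × Fin (2 * n) => S p.1 p.2
  have hX : X.map φ = S := by ext; simp [X, φ]
  have hgeneric := congrArg φ <|
    nsmul_right_injective (by positivity) (nsmul_sum_det_mirrorCols_eq_nsmul_pf X)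
  simp only [map_sum, RingHom.map_det, RingHom.map_pf, RingHom.mapMatrix_apply,
    ← Matrix.submatrix_map, pairForm_map, hX] at hgeneric
  exact hgeneric

/-- For a `2m × 2n` matrix `S` with `m ≤ n`,
`∑_{k₁ < ⋯ < kₘ ≤ n} det(S_{k₁}, …, S_{kₘ}, S_{2n+1-kₘ}, …, S_{2n+1-k₁})
  = Pf( ∑_{k=1}^{n} ( S_{ik} S_{j,2n+1-k} − S_{jk} S_{i,2n+1-k} ) )`,
where `S_j` denotes the `j`-th column of `S`. -/
theorem sum_det_mirror_eq_pf {R : Type*} [CommRing R] (m n : ℕ)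
    (hm : 0 < m) (hmn : m ≤ n) (S : Matrix (Fin (2 * m)) (Fin (2 * n)) R) :
    ∑ f ∈ Finset.univ.filter (fun f : Fin m → Fin n => StrictMono f),
        (S.submatrix id (mirrorCols f)).det =
      Pf (Matrix.of fun i j : Fin (2 * m) =>
        ∑ k : Fin n,
          (S i (colLow k) * S j (colHigh k) - S j (colLow k) * S i (colHigh k))) :=
  sum_det_mirror_eq_pf_general m n S
end
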